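/- Let W and T be real n×n matrices with W symmetric positive definite and T symmetric positive semidefinite, and let β > 0. Then, with ‖·‖₂ the spectral (operator ℓ²) norm and κ(W) = ‖W‖₂·‖W^{-1}‖₂, one has ‖(W + βT)^{-1}(βW - T)‖₂ ≤ √κ(W) · max over the eigenvalues μ of S = W^{-1/2} T W^{-1/2} of |β - μ|/(1 + βμ). -/

import Mathlib

/-! With `R = W^{1/2}` one has `W + βT = R(1 + βS)R` and `βW - T = R(β - S)R`, so the matrix is
conjugate by `R` to `(1 + βS)⁻¹(β - S)`. The eigenbasis of `S` diagonalises the latter by an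
orthogonal change of basis, so its norm is the largest `|β - μ|/(1 + βμ)`; and `‖R⁻¹‖‖R‖ = √κ(W)`
by the C⋆-identity `‖R * R‖ = ‖R‖²` for symmetric `R`. -/

open Matrix

/-- The square root of a positive semidefinite matrix, as defined in Mathlib (Dec 2024),
where it has since been removed. -/
noncomputable def Matrix.PosSemidef.sqrt {m : Type*} [Fintype m] [DecidableEq m]
    {𝕜 : Type*} [RCLike 𝕜] [PartialOrder 𝕜] {A : Matrix m m 𝕜} (hA : A.PosSemidef) : Matrix m m 𝕜 :=
  hA.1.eigenvectorUnitary.1 * diagonal ((↑) ∘ (√·) ∘ hA.1.eigenvalues) *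
    (star hA.1.eigenvectorUnitary : Matrix m m 𝕜)

/-- The operator norm on `n × n` real matrices induced by the Euclidean (`ℓ²`) vector norm. -/
noncomputable def l2OpNorm {n : ℕ} (M : Matrix (Fin n) (Fin n) ℝ) : ℝ :=
  ‖(Matrix.toEuclideanCLM (𝕜 := ℝ) M : EuclideanSpace ℝ (Fin n) →L[ℝ] EuclideanSpace ℝ (Fin n))‖

open scoped Matrix.Norms.L2Operator

lemma Unitary.norm_conjStarAlgAut {S E : Type*} [NormedRing E] [StarRing E] [CStarRing E]
    [SMul S E] [IsScalarTower S E E] [SMulCommClass S E E] (u : unitary E) (x : E) :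
    ‖Unitary.conjStarAlgAut S E u x‖ = ‖x‖ := by
  rw [Unitary.conjStarAlgAut_apply, ← Unitary.coe_star, CStarRing.norm_mul_coe_unitary,
    CStarRing.norm_coe_unitary_mul]

namespace Matrix

variable {m : Type*} [Fintype m] [DecidableEq m]

lemma PosSemidef.posSemidef_sqrt {A : Matrix m m ℝ} (hA : A.PosSemidef) : hA.sqrt.PosSemidef :=
  PosSemidef.mul_mul_conjTranspose_same
    (posSemidef_diagonal_iff.mpr fun i => by simp [Real.sqrt_nonneg]) _

lemma PosSemidef.sqrt_mul_sqrt {A : Matrix m m ℝ} (hA : A.PosSemidef) : hA.sqrt * hA.sqrt = A := by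
  have hsqrt : hA.sqrt = Unitary.conjStarAlgAut ℝ _ hA.1.eigenvectorUnitary
      (diagonal fun i => √(hA.1.eigenvalues i)) := rfl
  rw [hsqrt, ← map_mul, diagonal_mul_diagonal]
  conv_rhs => rw [hA.1.spectral_theorem]
  congr 2
  funext i
  simp [Real.mul_self_sqrt (hA.eigenvalues_nonneg i)]

lemma map_nonsing_inv {α F : Type*} [CommRing α] [EquivLike F (Matrix m m α) (Matrix m m α)]
    [RingEquivClass F (Matrix m m α) (Matrix m m α)] (φ : F) (A : Matrix m m α) :
    φ A⁻¹ = (φ A)⁻¹ := by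
  by_cases hA : IsUnit A
  · refine (inv_eq_left_inv ?_).symm
    rw [← map_mul, nonsing_inv_mul _ ((isUnit_iff_isUnit_det A).mp hA), map_one]
  · have hφA : ¬IsUnit (φ A) := (isUnit_map_iff φ A).not.mpr hA
    rw [isUnit_iff_isUnit_det] at hA hφA
    rw [nonsing_inv_apply_not_isUnit _ hA, nonsing_inv_apply_not_isUnit _ hφA, map_zero]

lemma mul_mul_inv_mul_mul_mul {α : Type*} [CommRing α] {R : Matrix m m α} (hR : IsUnit R)
    (A B : Matrix m m α) : (R * A * R)⁻¹ * (R * B * R) = R⁻¹ * (A⁻¹ * B) * R := by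
  have hRR : R⁻¹ * R = 1 := nonsing_inv_mul _ ((isUnit_iff_isUnit_det R).mp hR)
  simp only [mul_inv_rev, Matrix.mul_assoc]
  rw [← Matrix.mul_assoc R⁻¹ R, hRR, Matrix.one_mul]

lemma inv_one_add_smul_diagonal_mul_smul_one_sub_diagonal {K : Type*} [Field K] {β : K}
    {d : m → K} (hd : ∀ i, 1 + β * d i ≠ 0) : (1 + β • diagonal d)⁻¹ * (β • 1 - diagonal d) =
      diagonal fun i => (β - d i) / (1 + β * d i) := by
  have hinv : (diagonal fun i => 1 + β * d i)⁻¹ = diagonal fun i => (1 + β * d i)⁻¹ := by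
    refine inv_eq_left_inv ?_
    rw [diagonal_mul_diagonal, ← diagonal_one]
    exact congrArg diagonal (funext fun i => inv_mul_cancel₀ (hd i))
  rw [← diagonal_one, ← diagonal_smul, ← diagonal_smul, diagonal_add, diagonal_sub]
  simp only [Pi.smul_apply, smul_eq_mul, mul_one, hinv, diagonal_mul_diagonal, div_eq_inv_mul]

lemma IsHermitian.inv_one_add_smul_mul_smul_one_sub {S : Matrix m m ℝ} (hS : S.IsHermitian)
    {β : ℝ} (hβ : ∀ i, 1 + β * hS.eigenvalues i ≠ 0) :
    (1 + β • S)⁻¹ * (β • 1 - S) = Unitary.conjStarAlgAut ℝ _ hS.eigenvectorUnitary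
      (diagonal fun i => (β - hS.eigenvalues i) / (1 + β * hS.eigenvalues i)) := by
  conv_lhs => rw [hS.spectral_theorem]
  rw [← inv_one_add_smul_diagonal_mul_smul_one_sub_diagonal hβ, map_mul, map_nonsing_inv,
    map_add, map_one, map_smul, map_sub, map_smul, map_one]
  rfl

lemma PosSemidef.l2_opNorm_inv_one_add_smul_mul_smul_one_sub_le {S : Matrix m m ℝ}
    (hS : S.PosSemidef) {β : ℝ} (hβ : 0 ≤ β) : ‖(1 + β • S)⁻¹ * (β • 1 - S)‖ ≤
      ⨆ i, |β - hS.1.eigenvalues i| / (1 + β * hS.1.eigenvalues i) := by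
  have hpos i : 0 < 1 + β * hS.1.eigenvalues i := by
    have := hS.eigenvalues_nonneg i
    positivity
  rw [hS.1.inv_one_add_smul_mul_smul_one_sub fun i => (hpos i).ne',
    Unitary.norm_conjStarAlgAut, l2_opNorm_diagonal]
  refine (pi_norm_le_iff_of_nonneg <| Real.iSup_nonneg fun i =>
    div_nonneg (abs_nonneg _) (hpos i).le).mpr fun i => ?_
  rw [Real.norm_eq_abs, abs_div, abs_of_pos (hpos i)]
  exact le_ciSup (f := fun j => |β - hS.1.eigenvalues j| / (1 + β * hS.1.eigenvalues j))
    (Finite.bddAbove_range _) i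

lemma IsHermitian.sqrt_l2_opNorm_mul_self_mul_l2_opNorm_inv {𝕜 : Type*} [RCLike 𝕜]
    {R : Matrix m m 𝕜} (hR : R.IsHermitian) : √(‖R * R‖ * ‖(R * R)⁻¹‖) = ‖R⁻¹‖ * ‖R‖ := by
  rw [mul_inv_rev, hR.isSelfAdjoint.norm_mul_self, hR.inv.isSelfAdjoint.norm_mul_self,
    ← mul_pow, mul_comm, Real.sqrt_sq (by positivity)]

end Matrix

theorem c_s_bound_general
    {n : ℕ}
    (W T : Matrix (Fin n) (Fin n) ℝ)
    (hW : W.PosDef) (hT : T.PosSemidef)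
    (S : Matrix (Fin n) (Fin n) ℝ)
    (hSdef : S = (hW.posSemidef.sqrt)⁻¹ * T * (hW.posSemidef.sqrt)⁻¹)
    (hS : S.IsHermitian)
    (β : ℝ) (hβ : 0 < β) :
    l2OpNorm ((W + β • T)⁻¹ * (β • W - T)) ≤
      Real.sqrt (l2OpNorm W * l2OpNorm W⁻¹) *
        (⨆ i, |β - hS.eigenvalues i| / (1 + β * hS.eigenvalues i)) := by
  set R := hW.posSemidef.sqrt
  have hRR : R * R = W := hW.posSemidef.sqrt_mul_sqrt
  have hR : R.IsHermitian := hW.posSemidef.posSemidef_sqrt.isHermitian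
  have hRunit : IsUnit R := isUnit_of_mul_isUnit_left (hRR ▸ hW.isUnit)
  have hRdet : IsUnit R.det := (isUnit_iff_isUnit_det R).mp hRunit
  have hSpsd : S.PosSemidef := by
    simpa only [hSdef, hR.inv.eq] using hT.conjTranspose_mul_mul_same R⁻¹
  have hT_eq : T = R * S * R := by
    rw [hSdef, Matrix.mul_assoc, Matrix.mul_assoc, nonsing_inv_mul _ hRdet, Matrix.mul_one,
      ← Matrix.mul_assoc, mul_nonsing_inv _ hRdet, Matrix.one_mul]
  have hsim : (W + β • T)⁻¹ * (β • W - T) = R⁻¹ * ((1 + β • S)⁻¹ * (β • 1 - S)) * R := by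
    rw [← mul_mul_inv_mul_mul_mul hRunit, ← hRR, hT_eq]
    congr 1 <;> noncomm_ring
  have hκ : √(‖W‖ * ‖W⁻¹‖) = ‖R⁻¹‖ * ‖R‖ := by
    rw [← hR.sqrt_l2_opNorm_mul_self_mul_l2_opNorm_inv, hRR]
  -- `l2OpNorm` is definitionally the norm of `Matrix.Norms.L2Operator`.
  change ‖_‖ ≤ √(‖W‖ * ‖W⁻¹‖) * _
  rw [hsim, hκ]
  calc _ ≤ ‖R⁻¹‖ * ‖(1 + β • S)⁻¹ * (β • 1 - S)‖ * ‖R‖ := norm_mul₃_le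
    _ ≤ ‖R⁻¹‖ * (⨆ i, |β - hS.eigenvalues i| / (1 + β * hS.eigenvalues i)) * ‖R‖ := by
      gcongr
      exact hSpsd.l2_opNorm_inv_one_add_smul_mul_smul_one_sub_le hβ.le
    _ = _ := by ring

/-- **Lemma 2, estimate for `c_s(β)`.** For `W` symmetric positive definite, `T` symmetric
positive semidefinite and `β > 0`,
`‖(W + βT)⁻¹(βW - T)‖₂ ≤ √κ(W) · max_{μ ∈ σ(S)} |β - μ|/(1 + βμ)`,
where `S = W^{-1/2} T W^{-1/2}` and `κ(W) = ‖W‖₂·‖W⁻¹‖₂`. -/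
theorem c_s_bound
    {n : ℕ} (hn : 0 < n)
    (W T : Matrix (Fin n) (Fin n) ℝ)
    (hW : W.PosDef) (hT : T.PosSemidef)
    (S : Matrix (Fin n) (Fin n) ℝ)
    (hSdef : S = (hW.posSemidef.sqrt)⁻¹ * T * (hW.posSemidef.sqrt)⁻¹)
    (hS : S.IsHermitian)
    (β : ℝ) (hβ : 0 < β) :
    l2OpNorm ((W + β • T)⁻¹ * (β • W - T)) ≤
      Real.sqrt (l2OpNorm W * l2OpNorm W⁻¹) *
        (⨆ i, |β - hS.eigenvalues i| / (1 + β * hS.eigenvalues i)) :=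
  c_s_bound_general W T hW hT S hSdef hS β hβ
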